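/- (Dual Maschke-type theorem.) Let (A,C)_ψ be an entwining structure with A finitely generated projective over k, admitting a normalised cointegral map φ : A* ⊗ C → A. If f : N → M is a morphism of entwined modules that has a section (resp. retraction) as a right C-comodule map g, then f has a section (resp. retraction) in the category of entwined modules, given by g̃(m) = Σᵢ g(m₍₀₎·aᵢ) · φ(aᵢ* ⊗ m₍₁₎), where {aᵢ, aᵢ*} is a dual basis of A. -/

import Mathlib

open TensorProduct LinearMap

noncomputable section

variable (k A C : Type*) [CommRing k] [Ring A] [Algebra k A]
  [AddCommGroup C] [Module k C] [Coalgebra k C]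

/-- An entwining structure `(A,C)_ψ` over `k`. -/
structure Entwining where
  psi : C ⊗[k] A →ₗ[k] A ⊗[k] C
  mul_compat :
    psi ∘ₗ lTensor C (LinearMap.mul' k A)
      = rTensor C (LinearMap.mul' k A)
        ∘ₗ (TensorProduct.assoc k A A C).symm.toLinearMap
        ∘ₗ lTensor A psi
        ∘ₗ (TensorProduct.assoc k A C A).toLinearMap
        ∘ₗ rTensor A psi
        ∘ₗ (TensorProduct.assoc k C A A).symm.toLinearMap
  one_compat : ∀ c : C, psi (c ⊗ₜ[k] (1 : A)) = (1 : A) ⊗ₜ[k] c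
  comul_compat :
    lTensor A (Coalgebra.comul (R := k) (A := C)) ∘ₗ psi
      = (TensorProduct.assoc k A C C).toLinearMap
        ∘ₗ rTensor C psi
        ∘ₗ (TensorProduct.assoc k C A C).symm.toLinearMap
        ∘ₗ lTensor C psi
        ∘ₗ (TensorProduct.assoc k C C A).toLinearMap
        ∘ₗ rTensor A (Coalgebra.comul (R := k) (A := C))
  counit_compat : ∀ (c : C) (a : A),
    (TensorProduct.rid k A)
        ((lTensor A (Coalgebra.counit (R := k) (A := C))) (psi (c ⊗ₜ[k] a)))
      = Coalgebra.counit (R := k) c • a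

variable {k A C} in
/-- `act` is a unital associative right `A`-action on `M`. -/
def IsRAction {M : Type*} [AddCommGroup M] [Module k M]
    (act : M ⊗[k] A →ₗ[k] M) : Prop :=
  (∀ m : M, act (m ⊗ₜ[k] (1 : A)) = m) ∧
  act ∘ₗ lTensor M (LinearMap.mul' k A)
    = act ∘ₗ rTensor A act ∘ₗ (TensorProduct.assoc k M A A).symm.toLinearMap

variable {k A C} in
/-- `coact` is a counital coassociative right `C`-coaction on `M`. -/
def IsRCoaction {M : Type*} [AddCommGroup M] [Module k M]
    (coact : M →ₗ[k] M ⊗[k] C) : Prop :=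
  (∀ m : M, (TensorProduct.rid k M)
      ((lTensor M (Coalgebra.counit (R := k) (A := C))) (coact m)) = m) ∧
  rTensor C coact ∘ₗ coact
    = (TensorProduct.assoc k M C C).symm.toLinearMap
      ∘ₗ lTensor M (Coalgebra.comul (R := k) (A := C)) ∘ₗ coact

variable {k A C} in
/-- The compatibility condition making `(M, act, coact)` an entwined
`(A,C)_ψ`-module: `ρ^M(m·a) = m₍₀₎·a_α ⊗ m₍₁₎^α`. -/
def IsEntwinedModule (E : Entwining k A C) {M : Type*} [AddCommGroup M] [Module k M]
    (act : M ⊗[k] A →ₗ[k] M) (coact : M →ₗ[k] M ⊗[k] C) : Prop :=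
  IsRAction act ∧ IsRCoaction coact ∧
  coact ∘ₗ act
    = rTensor C act
      ∘ₗ (TensorProduct.assoc k M A C).symm.toLinearMap
      ∘ₗ lTensor M E.psi
      ∘ₗ (TensorProduct.assoc k M C A).toLinearMap
      ∘ₗ rTensor A coact

variable {k A C} in
/-- A morphism of entwined modules: right `A`-linear and right `C`-colinear. -/
def IsEntwinedHom {M N : Type*} [AddCommGroup M] [Module k M]
    [AddCommGroup N] [Module k N]
    (actM : M ⊗[k] A →ₗ[k] M) (coactM : M →ₗ[k] M ⊗[k] C)
    (actN : N ⊗[k] A →ₗ[k] N) (coactN : N →ₗ[k] N ⊗[k] C)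
    (f : M →ₗ[k] N) : Prop :=
  (f ∘ₗ actM = actN ∘ₗ rTensor A f) ∧ (coactN ∘ₗ f = rTensor C f ∘ₗ coactM)

variable {k A C} in
/-- `ψ( - ⊗ a₀) : C →ₗ A ⊗ C`. -/
def psiAt (E : Entwining k A C) (a₀ : A) : C →ₗ[k] A ⊗[k] C :=
  E.psi ∘ₗ ((TensorProduct.mk k C A).flip a₀)

variable {k A C} in
/-- `φ(ξ₀ ⊗ -) : C →ₗ A` for a cointegral-type map `φ : A* ⊗ C → A`. -/
def cointAt (φc : Module.Dual k A ⊗[k] C →ₗ[k] A) (ξ₀ : Module.Dual k A) :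
    C →ₗ[k] A :=
  φc ∘ₗ (TensorProduct.mk k (Module.Dual k A) C ξ₀)

variable {k A C} in
/-- `φ : A* ⊗ C → A` is a normalised cointegral map in `(A,C)_ψ`
(Definition 4.6), relative to a finite dual basis `{aᵢ, aᵢ*}` of `A`
(so that `coev_A(1) = Σᵢ aᵢ ⊗ aᵢ*`). -/
def IsNormalisedCointegralMap (E : Entwining k A C) (n : ℕ)
    (aB : Fin n → A) (aD : Fin n → Module.Dual k A)
    (φc : Module.Dual k A ⊗[k] C →ₗ[k] A) : Prop :=
  -- (1) `(A⊗ψ)∘(ψ⊗φ)∘(C⊗coev_A⊗C)∘Δ = (A⊗φ⊗C)∘(coev_A⊗Δ)`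
  (∀ c : C,
    ∑ i, (lTensor A E.psi)
        ((TensorProduct.assoc k A C A)
          ((TensorProduct.map (psiAt E (aB i)) (cointAt φc (aD i)))
            (Coalgebra.comul (R := k) c)))
      = ∑ i, (aB i) ⊗ₜ[k]
          ((rTensor C (cointAt φc (aD i))) (Coalgebra.comul (R := k) c))) ∧
  -- (2) `(A⊗μ)∘(A⊗φ⊗A)∘(coev_A⊗C⊗A) = (μ⊗φ)∘(A⊗coev_A⊗C)∘ψ`
  (∀ (c : C) (a : A),
    (∑ i, (aB i) ⊗ₜ[k] (φc ((aD i) ⊗ₜ[k] c) * a))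
      = (∑ i, TensorProduct.map (LinearMap.mulRight k (aB i))
            (cointAt φc (aD i)))
          (E.psi (c ⊗ₜ[k] a))) ∧
  -- (3) `μ∘(A⊗φ)∘(coev_A⊗C) = 1_A ∘ ε`
  (∀ c : C,
    ∑ i, (aB i) * φc ((aD i) ⊗ₜ[k] c)
      = (Coalgebra.counit (R := k) c) • (1 : A))

variable {k A C} in
/-- The averaged map `g̃(m) = Σᵢ g(m₍₀₎·aᵢ) · φ(aᵢ* ⊗ m₍₁₎)` (Lemma 4.8). -/
def cointAvg (n : ℕ) (aB : Fin n → A) (aD : Fin n → Module.Dual k A)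
    (φc : Module.Dual k A ⊗[k] C →ₗ[k] A)
    {M N : Type*} [AddCommGroup M] [Module k M] [AddCommGroup N] [Module k N]
    (actM : M ⊗[k] A →ₗ[k] M) (coactM : M →ₗ[k] M ⊗[k] C)
    (actN : N ⊗[k] A →ₗ[k] N) (g : M →ₗ[k] N) : M →ₗ[k] N :=
  actN
  ∘ₗ (∑ i, TensorProduct.map
        (g ∘ₗ actM ∘ₗ ((TensorProduct.mk k M A).flip (aB i)))
        (cointAt φc (aD i)))
  ∘ₗ coactM


section MaschkeAux

variable {k A C : Type*} [CommRing k] [Ring A] [Algebra k A]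
  [AddCommGroup C] [Module k C] [Coalgebra k C]

private lemma act_assoc_pt {M : Type*} [AddCommGroup M] [Module k M]
    {act : M ⊗[k] A →ₗ[k] M} (h : IsRAction act) (x : M) (a b : A) :
    act (act (x ⊗ₜ[k] a) ⊗ₜ[k] b) = act (x ⊗ₜ[k] (a * b)) := by
  have := LinearMap.congr_fun h.2 (x ⊗ₜ[k] (a ⊗ₜ[k] b))
  simpa using this.symm

/-- The central averaging identity: `Σᵢ (p·aᵢ)·φ(aᵢ*⊗p₁) = p` pointwise. -/
private lemma avg_id (n : ℕ) (aB : Fin n → A) (aD : Fin n → Module.Dual k A)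
    (φc : Module.Dual k A ⊗[k] C →ₗ[k] A)
    (h3 : ∀ c : C, ∑ i, (aB i) * φc ((aD i) ⊗ₜ[k] c)
      = (Coalgebra.counit (R := k) c) • (1 : A))
    {P : Type*} [AddCommGroup P] [Module k P]
    (actP : P ⊗[k] A →ₗ[k] P) (coactP : P →ₗ[k] P ⊗[k] C)
    (hact : IsRAction actP) (hco : IsRCoaction coactP) :
    actP ∘ₗ (∑ i, TensorProduct.map
        (actP ∘ₗ ((TensorProduct.mk k P A).flip (aB i)))
        (cointAt φc (aD i))) ∘ₗ coactP = LinearMap.id := by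
  have key : actP ∘ₗ (∑ i, TensorProduct.map
      (actP ∘ₗ ((TensorProduct.mk k P A).flip (aB i))) (cointAt φc (aD i)))
      = (TensorProduct.rid k P).toLinearMap
        ∘ₗ lTensor P (Coalgebra.counit (R := k) (A := C)) := by
    apply TensorProduct.ext'
    intro x c
    simp only [comp_apply, LinearMap.sum_apply, map_sum, TensorProduct.map_tmul,
      flip_apply, TensorProduct.mk_apply, cointAt, lTensor_tmul,
      LinearEquiv.coe_coe, TensorProduct.rid_tmul]
    calc ∑ i, actP (actP (x ⊗ₜ[k] aB i) ⊗ₜ[k] φc (aD i ⊗ₜ[k] c))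
        = ∑ i, actP (x ⊗ₜ[k] (aB i * φc (aD i ⊗ₜ[k] c))) := by
          refine Finset.sum_congr rfl fun i _ => act_assoc_pt hact x _ _
      _ = actP (x ⊗ₜ[k] (∑ i, aB i * φc (aD i ⊗ₜ[k] c))) := by
          rw [← map_sum, TensorProduct.tmul_sum]
      _ = Coalgebra.counit (R := k) c • x := by
          rw [h3 c, TensorProduct.tmul_smul]
          simp [hact.1 x]
  ext m
  have e : (actP ∘ₗ (∑ i, TensorProduct.map
      (actP ∘ₗ ((TensorProduct.mk k P A).flip (aB i))) (cointAt φc (aD i)))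
      ∘ₗ coactP) m
      = (actP ∘ₗ (∑ i, TensorProduct.map
      (actP ∘ₗ ((TensorProduct.mk k P A).flip (aB i))) (cointAt φc (aD i))))
      (coactP m) := rfl
  rw [e, key]
  simpa using hco.1 m

private lemma coact_act_pt {E : Entwining k A C}
    {M : Type*} [AddCommGroup M] [Module k M]
    {actM : M ⊗[k] A →ₗ[k] M} {coactM : M →ₗ[k] M ⊗[k] C}
    (hM : IsEntwinedModule E actM coactM) (m : M) (a : A) :
    coactM (actM (m ⊗ₜ[k] a))
      = (rTensor C actM ∘ₗ (TensorProduct.assoc k M A C).symm.toLinearMap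
          ∘ₗ lTensor M E.psi ∘ₗ (TensorProduct.assoc k M C A).toLinearMap
          ∘ₗ (TensorProduct.mk k (M ⊗[k] C) A).flip a) (coactM m) := by
  have := LinearMap.congr_fun hM.2.2 (m ⊗ₜ[k] a)
  simpa only [comp_apply, rTensor_tmul, flip_apply, TensorProduct.mk_apply]
    using this

/-- `g̃` is right `A`-linear. -/
private lemma gtilde_alin (E : Entwining k A C) (n : ℕ)
    (aB : Fin n → A) (aD : Fin n → Module.Dual k A)
    (φc : Module.Dual k A ⊗[k] C →ₗ[k] A)
    (h2 : ∀ (c : C) (a : A),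
      (∑ i, (aB i) ⊗ₜ[k] (φc ((aD i) ⊗ₜ[k] c) * a))
        = (∑ i, TensorProduct.map (LinearMap.mulRight k (aB i))
              (cointAt φc (aD i))) (E.psi (c ⊗ₜ[k] a)))
    {M N : Type*} [AddCommGroup M] [Module k M] [AddCommGroup N] [Module k N]
    (actM : M ⊗[k] A →ₗ[k] M) (coactM : M →ₗ[k] M ⊗[k] C)
    (actN : N ⊗[k] A →ₗ[k] N)
    (hM : IsEntwinedModule E actM coactM) (hNact : IsRAction actN)
    (g : M →ₗ[k] N) :
    (cointAvg n aB aD φc actM coactM actN g) ∘ₗ actM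
      = actN ∘ₗ rTensor A (cointAvg n aB aD φc actM coactM actN g) := by
  set S : M ⊗[k] C →ₗ[k] N ⊗[k] A :=
    ∑ i, TensorProduct.map (g ∘ₗ actM ∘ₗ ((TensorProduct.mk k M A).flip (aB i)))
      (cointAt φc (aD i)) with hS
  apply TensorProduct.ext'
  intro m a
  have hun : cointAvg n aB aD φc actM coactM actN g = actN ∘ₗ S ∘ₗ coactM := rfl
  rw [hun]
  simp only [comp_apply, rTensor_tmul]
  rw [coact_act_pt hM m a]
  have key : actN ∘ₗ S ∘ₗ rTensor C actM
        ∘ₗ (TensorProduct.assoc k M A C).symm.toLinearMap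
        ∘ₗ lTensor M E.psi ∘ₗ (TensorProduct.assoc k M C A).toLinearMap
        ∘ₗ (TensorProduct.mk k (M ⊗[k] C) A).flip a
      = actN ∘ₗ ((TensorProduct.mk k N A).flip a) ∘ₗ actN ∘ₗ S := by
    apply TensorProduct.ext'
    intro x c
    set Tx : A ⊗[k] A →ₗ[k] N :=
      actN ∘ₗ rTensor A (g ∘ₗ actM ∘ₗ TensorProduct.mk k M A x) with hTx
    have L2b : actN ∘ₗ S ∘ₗ rTensor C actM
          ∘ₗ (TensorProduct.assoc k M A C).symm.toLinearMap
          ∘ₗ TensorProduct.mk k M (A ⊗[k] C) x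
        = Tx ∘ₗ (∑ i, TensorProduct.map (LinearMap.mulRight k (aB i))
            (cointAt φc (aD i))) := by
      apply TensorProduct.ext'
      intro b c'
      simp only [hS, hTx, comp_apply, TensorProduct.mk_apply,
        LinearEquiv.coe_coe, TensorProduct.assoc_symm_tmul, rTensor_tmul,
        LinearMap.sum_apply, TensorProduct.map_tmul, flip_apply, map_sum,
        mulRight_apply, cointAt]
      refine Finset.sum_congr rfl fun i _ => ?_
      rw [act_assoc_pt hM.1 x b (aB i)]
    calc (actN ∘ₗ S ∘ₗ rTensor C actM
            ∘ₗ (TensorProduct.assoc k M A C).symm.toLinearMap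
            ∘ₗ lTensor M E.psi ∘ₗ (TensorProduct.assoc k M C A).toLinearMap
            ∘ₗ (TensorProduct.mk k (M ⊗[k] C) A).flip a) (x ⊗ₜ[k] c)
        = (actN ∘ₗ S ∘ₗ rTensor C actM
            ∘ₗ (TensorProduct.assoc k M A C).symm.toLinearMap
            ∘ₗ TensorProduct.mk k M (A ⊗[k] C) x) (E.psi (c ⊗ₜ[k] a)) := by
          simp only [comp_apply, flip_apply, TensorProduct.mk_apply,
            LinearEquiv.coe_coe, TensorProduct.assoc_tmul, lTensor_tmul]
      _ = Tx ((∑ i, TensorProduct.map (LinearMap.mulRight k (aB i))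
            (cointAt φc (aD i))) (E.psi (c ⊗ₜ[k] a))) := by
          rw [L2b]; rfl
      _ = Tx (∑ i, (aB i) ⊗ₜ[k] (φc ((aD i) ⊗ₜ[k] c) * a)) := by
          rw [← h2 c a]
      _ = (actN ∘ₗ ((TensorProduct.mk k N A).flip a) ∘ₗ actN ∘ₗ S)
            (x ⊗ₜ[k] c) := by
          simp only [hS, hTx, map_sum, comp_apply, rTensor_tmul,
            TensorProduct.mk_apply, LinearMap.sum_apply,
            TensorProduct.map_tmul, flip_apply, cointAt,
            TensorProduct.sum_tmul]
          refine Finset.sum_congr rfl fun i _ => ?_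
          rw [act_assoc_pt hNact]
  exact LinearMap.congr_fun key (coactM m)

private lemma subL3 (E : Entwining k A C)
    {M N : Type*} [AddCommGroup M] [Module k M] [AddCommGroup N] [Module k N]
    (actM : M ⊗[k] A →ₗ[k] M) (actN : N ⊗[k] A →ₗ[k] N) (g : M →ₗ[k] N)
    (x : M) (b₂ : A) :
    rTensor C actN ∘ₗ (TensorProduct.assoc k N A C).symm.toLinearMap
        ∘ₗ lTensor N E.psi ∘ₗ (TensorProduct.assoc k N C A).toLinearMap
        ∘ₗ ((TensorProduct.mk k (N ⊗[k] C) A).flip b₂)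
        ∘ₗ rTensor C g ∘ₗ rTensor C actM
        ∘ₗ (TensorProduct.assoc k M A C).symm.toLinearMap
        ∘ₗ TensorProduct.mk k M (A ⊗[k] C) x
      = (rTensor C actN ∘ₗ (TensorProduct.assoc k N A C).symm.toLinearMap
          ∘ₗ rTensor (A ⊗[k] C) (g ∘ₗ actM ∘ₗ TensorProduct.mk k M A x))
        ∘ₗ lTensor A E.psi ∘ₗ (TensorProduct.assoc k A C A).toLinearMap
        ∘ₗ ((TensorProduct.mk k (A ⊗[k] C) A).flip b₂) := by
  apply TensorProduct.ext'
  intro b c'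
  simp only [comp_apply, TensorProduct.mk_apply, flip_apply,
    LinearEquiv.coe_coe, TensorProduct.assoc_tmul,
    TensorProduct.assoc_symm_tmul, lTensor_tmul, rTensor_tmul]

/-- `g̃` is right `C`-colinear. -/
private lemma gtilde_colin (E : Entwining k A C) (n : ℕ)
    (aB : Fin n → A) (aD : Fin n → Module.Dual k A)
    (φc : Module.Dual k A ⊗[k] C →ₗ[k] A)
    (h1 : ∀ c : C,
      ∑ i, (lTensor A E.psi)
          ((TensorProduct.assoc k A C A)
            ((TensorProduct.map (psiAt E (aB i)) (cointAt φc (aD i)))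
              (Coalgebra.comul (R := k) c)))
        = ∑ i, (aB i) ⊗ₜ[k]
            ((rTensor C (cointAt φc (aD i))) (Coalgebra.comul (R := k) c)))
    {M N : Type*} [AddCommGroup M] [Module k M] [AddCommGroup N] [Module k N]
    (actM : M ⊗[k] A →ₗ[k] M) (coactM : M →ₗ[k] M ⊗[k] C)
    (actN : N ⊗[k] A →ₗ[k] N) (coactN : N →ₗ[k] N ⊗[k] C)
    (hM : IsEntwinedModule E actM coactM) (hN : IsEntwinedModule E actN coactN)
    (g : M →ₗ[k] N) (hg : coactN ∘ₗ g = rTensor C g ∘ₗ coactM) :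
    coactN ∘ₗ cointAvg n aB aD φc actM coactM actN g
      = rTensor C (cointAvg n aB aD φc actM coactM actN g) ∘ₗ coactM := by
  set S : M ⊗[k] C →ₗ[k] N ⊗[k] A :=
    ∑ i, TensorProduct.map (g ∘ₗ actM ∘ₗ ((TensorProduct.mk k M A).flip (aB i)))
      (cointAt φc (aD i)) with hS
  set Qi : Fin n → (M ⊗[k] C →ₗ[k] M ⊗[k] C) := fun i =>
    rTensor C actM ∘ₗ (TensorProduct.assoc k M A C).symm.toLinearMap
      ∘ₗ lTensor M E.psi ∘ₗ (TensorProduct.assoc k M C A).toLinearMap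
      ∘ₗ ((TensorProduct.mk k (M ⊗[k] C) A).flip (aB i)) with hQi
  have step_d1 : rTensor A coactN ∘ₗ S
      = (∑ i, TensorProduct.map (rTensor C g ∘ₗ Qi i) (cointAt φc (aD i)))
        ∘ₗ rTensor C coactM := by
    apply TensorProduct.ext'
    intro x c
    simp only [hS, hQi, comp_apply, LinearMap.sum_apply, map_sum,
      TensorProduct.map_tmul, flip_apply, TensorProduct.mk_apply,
      rTensor_tmul]
    refine Finset.sum_congr rfl fun i _ => ?_
    have hgp := LinearMap.congr_fun hg (actM (x ⊗ₜ[k] aB i))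
    simp only [comp_apply] at hgp
    rw [hgp, coact_act_pt hM x (aB i)]
    simp only [comp_apply, flip_apply, TensorProduct.mk_apply]
  set Big1 : M ⊗[k] (C ⊗[k] C) →ₗ[k] N ⊗[k] C :=
    rTensor C actN ∘ₗ (TensorProduct.assoc k N A C).symm.toLinearMap
      ∘ₗ lTensor N E.psi ∘ₗ (TensorProduct.assoc k N C A).toLinearMap
      ∘ₗ (∑ i, TensorProduct.map (rTensor C g ∘ₗ Qi i) (cointAt φc (aD i)))
      ∘ₗ (TensorProduct.assoc k M C C).symm.toLinearMap with hBig1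
  set Big2 : M ⊗[k] (C ⊗[k] C) →ₗ[k] N ⊗[k] C :=
    rTensor C (actN ∘ₗ S) ∘ₗ (TensorProduct.assoc k M C C).symm.toLinearMap
      with hBig2
  have key : Big1 ∘ₗ lTensor M (Coalgebra.comul (R := k) (A := C))
      = Big2 ∘ₗ lTensor M (Coalgebra.comul (R := k) (A := C)) := by
    apply TensorProduct.ext'
    intro x c
    set Wx : A ⊗[k] (A ⊗[k] C) →ₗ[k] N ⊗[k] C :=
      rTensor C actN ∘ₗ (TensorProduct.assoc k N A C).symm.toLinearMap
        ∘ₗ rTensor (A ⊗[k] C) (g ∘ₗ actM ∘ₗ TensorProduct.mk k M A x) with hWx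
    have hi : Big1 ∘ₗ TensorProduct.mk k M (C ⊗[k] C) x
        = ∑ i, Wx ∘ₗ lTensor A E.psi
            ∘ₗ (TensorProduct.assoc k A C A).toLinearMap
            ∘ₗ TensorProduct.map (psiAt E (aB i)) (cointAt φc (aD i)) := by
      apply TensorProduct.ext'
      intro c1 c2
      simp only [hBig1, hQi, comp_apply, LinearMap.sum_apply,
        TensorProduct.mk_apply, LinearEquiv.coe_coe,
        TensorProduct.assoc_symm_tmul, TensorProduct.map_tmul, flip_apply,
        TensorProduct.assoc_tmul, lTensor_tmul, map_sum, psiAt]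
      refine Finset.sum_congr rfl fun i _ => ?_
      have := LinearMap.congr_fun (subL3 E actM actN g x (φc (aD i ⊗ₜ[k] c2)))
        (E.psi (c1 ⊗ₜ[k] aB i))
      simpa only [comp_apply, TensorProduct.mk_apply, flip_apply,
        LinearEquiv.coe_coe, cointAt, hWx] using this
    have hii : Big2 ∘ₗ TensorProduct.mk k M (C ⊗[k] C) x
        = ∑ i, Wx ∘ₗ TensorProduct.mk k A (A ⊗[k] C) (aB i)
            ∘ₗ rTensor C (cointAt φc (aD i)) := by
      apply TensorProduct.ext'
      intro c1 c2
      simp only [hBig2, hS, hWx, comp_apply, LinearMap.sum_apply,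
        TensorProduct.mk_apply, LinearEquiv.coe_coe,
        TensorProduct.assoc_symm_tmul, rTensor_tmul, TensorProduct.map_tmul,
        flip_apply, map_sum, TensorProduct.sum_tmul]
    have exp1 : Big1 (x ⊗ₜ[k] Coalgebra.comul (R := k) c)
        = (Big1 ∘ₗ TensorProduct.mk k M (C ⊗[k] C) x)
            (Coalgebra.comul (R := k) c) := rfl
    have exp2 : Big2 (x ⊗ₜ[k] Coalgebra.comul (R := k) c)
        = (Big2 ∘ₗ TensorProduct.mk k M (C ⊗[k] C) x)
            (Coalgebra.comul (R := k) c) := rfl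
    simp only [comp_apply, lTensor_tmul]
    rw [exp1, exp2, hi, hii]
    have hW := congrArg Wx (h1 c)
    rw [map_sum, map_sum] at hW
    simpa only [LinearMap.sum_apply, comp_apply, TensorProduct.mk_apply,
      LinearEquiv.coe_coe] using hW
  -- assemble
  ext m
  have hun : cointAvg n aB aD φc actM coactM actN g = actN ∘ₗ S ∘ₗ coactM := rfl
  rw [hun]
  have lhs1 : (coactN ∘ₗ actN ∘ₗ S ∘ₗ coactM) m
      = (rTensor C actN ∘ₗ (TensorProduct.assoc k N A C).symm.toLinearMap
          ∘ₗ lTensor N E.psi ∘ₗ (TensorProduct.assoc k N C A).toLinearMap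
          ∘ₗ rTensor A coactN) (S (coactM m)) :=
    LinearMap.congr_fun hN.2.2 (S (coactM m))
  have coas : rTensor C coactM (coactM m)
      = (TensorProduct.assoc k M C C).symm.toLinearMap
          ((lTensor M (Coalgebra.comul (R := k) (A := C))) (coactM m)) :=
    LinearMap.congr_fun hM.2.1.2 m
  have lhs2 : (coactN ∘ₗ actN ∘ₗ S ∘ₗ coactM) m
      = Big1 ((lTensor M (Coalgebra.comul (R := k) (A := C))) (coactM m)) := by
    rw [lhs1]
    simp only [comp_apply]
    have sd := LinearMap.congr_fun step_d1 (coactM m)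
    simp only [comp_apply] at sd
    rw [sd, coas]
    simp only [hBig1, comp_apply]
  have rhs2 : ((rTensor C (actN ∘ₗ S ∘ₗ coactM)) ∘ₗ coactM) m
      = Big2 ((lTensor M (Coalgebra.comul (R := k) (A := C))) (coactM m)) := by
    have : rTensor C (actN ∘ₗ S ∘ₗ coactM)
        = rTensor C (actN ∘ₗ S) ∘ₗ rTensor C coactM := by
      rw [← rTensor_comp]; rfl
    simp only [comp_apply, this]
    rw [coas]
    simp only [hBig2, comp_apply]
  rw [lhs2, rhs2]
  have kk := LinearMap.congr_fun key (coactM m)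
  simp only [comp_apply] at kk
  exact kk

end MaschkeAux

/-- dual Maschke-type theorem: if `A` is f.g. projective over
`k` (with dual basis `{aᵢ, aᵢ*}`) and `(A,C)_ψ` admits a normalised cointegral
map, then a morphism of entwined modules with a section (resp. retraction) as a
right `C`-comodule map has a section (resp. retraction) in the category of
entwined modules, namely `g̃(m) = Σᵢ g(m₍₀₎·aᵢ)·φ(aᵢ* ⊗ m₍₁₎)`. -/
theorem maschke_entwined_dual (E : Entwining k A C)
    (n : ℕ) (aB : Fin n → A) (aD : Fin n → Module.Dual k A)
    (hdual : ∀ a : A, ∑ i, (aD i a) • (aB i) = a)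
    (φc : Module.Dual k A ⊗[k] C →ₗ[k] A)
    (hφ : IsNormalisedCointegralMap E n aB aD φc)
    (M N : Type*) [AddCommGroup M] [Module k M] [AddCommGroup N] [Module k N]
    (actM : M ⊗[k] A →ₗ[k] M) (coactM : M →ₗ[k] M ⊗[k] C)
    (actN : N ⊗[k] A →ₗ[k] N) (coactN : N →ₗ[k] N ⊗[k] C)
    (hM : IsEntwinedModule E actM coactM) (hN : IsEntwinedModule E actN coactN)
    (f : N →ₗ[k] M) (hf : IsEntwinedHom actN coactN actM coactM f) :
    -- section case: `g` a right `C`-comodule map with `f ∘ g = id`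
    (∀ g : M →ₗ[k] N,
      (coactN ∘ₗ g = rTensor C g ∘ₗ coactM) →
      f ∘ₗ g = LinearMap.id →
      IsEntwinedHom actM coactM actN coactN
        (cointAvg n aB aD φc actM coactM actN g) ∧
      f ∘ₗ cointAvg n aB aD φc actM coactM actN g = LinearMap.id) ∧
    -- retraction case: `g` a right `C`-comodule map with `g ∘ f = id`
    (∀ g : M →ₗ[k] N,
      (coactN ∘ₗ g = rTensor C g ∘ₗ coactM) →
      g ∘ₗ f = LinearMap.id →
      IsEntwinedHom actM coactM actN coactN
        (cointAvg n aB aD φc actM coactM actN g) ∧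
      cointAvg n aB aD φc actM coactM actN g ∘ₗ f = LinearMap.id) := by
  obtain ⟨h1, h2, h3⟩ := hφ
  have hhom : ∀ g : M →ₗ[k] N, coactN ∘ₗ g = rTensor C g ∘ₗ coactM →
      IsEntwinedHom actM coactM actN coactN
        (cointAvg n aB aD φc actM coactM actN g) := fun g hg =>
    ⟨gtilde_alin E n aB aD φc h2 actM coactM actN hM hN.1 g,
     gtilde_colin E n aB aD φc h1 actM coactM actN coactN hM hN g hg⟩
  constructor
  · intro g hg hfg
    refine ⟨hhom g hg, ?_⟩
    have step1 : f ∘ₗ actN ∘ₗ (∑ i, TensorProduct.map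
          (g ∘ₗ actM ∘ₗ ((TensorProduct.mk k M A).flip (aB i)))
          (cointAt φc (aD i)))
        = actM ∘ₗ (∑ i, TensorProduct.map
          (actM ∘ₗ ((TensorProduct.mk k M A).flip (aB i)))
          (cointAt φc (aD i))) := by
      apply TensorProduct.ext'
      intro x c
      simp only [comp_apply, LinearMap.sum_apply, map_sum,
        TensorProduct.map_tmul, flip_apply, TensorProduct.mk_apply]
      refine Finset.sum_congr rfl fun i _ => ?_
      have hfa := LinearMap.congr_fun hf.1
        (g (actM (x ⊗ₜ[k] aB i)) ⊗ₜ[k] (cointAt φc (aD i)) c)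
      simp only [comp_apply, rTensor_tmul] at hfa
      have hfgp := LinearMap.congr_fun hfg (actM (x ⊗ₜ[k] aB i))
      simp only [comp_apply, id_apply] at hfgp
      rw [hfa, hfgp]
    ext m
    have s1 := LinearMap.congr_fun step1 (coactM m)
    have e2 := LinearMap.congr_fun
      (avg_id n aB aD φc h3 actM coactM hM.1 hM.2.1) m
    simp only [comp_apply, id_apply] at s1 e2 ⊢
    calc f ((cointAvg n aB aD φc actM coactM actN g) m)
        = f (actN ((∑ i, TensorProduct.map
            (g ∘ₗ actM ∘ₗ ((TensorProduct.mk k M A).flip (aB i)))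
            (cointAt φc (aD i))) (coactM m))) := rfl
      _ = actM ((∑ i, TensorProduct.map
            (actM ∘ₗ ((TensorProduct.mk k M A).flip (aB i)))
            (cointAt φc (aD i))) (coactM m)) := s1
      _ = m := e2
  · intro g hg hgf
    refine ⟨hhom g hg, ?_⟩
    have step1 : actN ∘ₗ (∑ i, TensorProduct.map
          (g ∘ₗ actM ∘ₗ ((TensorProduct.mk k M A).flip (aB i)))
          (cointAt φc (aD i))) ∘ₗ rTensor C f
        = actN ∘ₗ (∑ i, TensorProduct.map
          (actN ∘ₗ ((TensorProduct.mk k N A).flip (aB i)))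
          (cointAt φc (aD i))) := by
      apply TensorProduct.ext'
      intro y c
      simp only [comp_apply, LinearMap.sum_apply, map_sum,
        TensorProduct.map_tmul, flip_apply, TensorProduct.mk_apply,
        rTensor_tmul]
      refine Finset.sum_congr rfl fun i _ => ?_
      have hfa := LinearMap.congr_fun hf.1 (y ⊗ₜ[k] aB i)
      simp only [comp_apply, rTensor_tmul] at hfa
      have hgfp := LinearMap.congr_fun hgf (actN (y ⊗ₜ[k] aB i))
      simp only [comp_apply, id_apply] at hgfp
      rw [← hfa, hgfp]
    ext nn
    have hcf := LinearMap.congr_fun hf.2 nn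
    simp only [comp_apply] at hcf
    have s1 := LinearMap.congr_fun step1 (coactN nn)
    have e2 := LinearMap.congr_fun
      (avg_id n aB aD φc h3 actN coactN hN.1 hN.2.1) nn
    simp only [comp_apply, id_apply] at s1 e2 ⊢
    calc (cointAvg n aB aD φc actM coactM actN g) (f nn)
        = actN ((∑ i, TensorProduct.map
            (g ∘ₗ actM ∘ₗ ((TensorProduct.mk k M A).flip (aB i)))
            (cointAt φc (aD i))) (coactM (f nn))) := rfl
      _ = actN ((∑ i, TensorProduct.map
            (g ∘ₗ actM ∘ₗ ((TensorProduct.mk k M A).flip (aB i)))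
            (cointAt φc (aD i))) (rTensor C f (coactN nn))) := by rw [hcf]
      _ = actN ((∑ i, TensorProduct.map
            (actN ∘ₗ ((TensorProduct.mk k N A).flip (aB i)))
            (cointAt φc (aD i))) (coactN nn)) := s1
      _ = nn := e2
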